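/- arXiv:1302.1329 — 5 statements merged into one kernel-verified Lean document; each statement's English description precedes it below -/
import Mathlib

section
/- The map τ on partitions with maximal hook length less than N, defined by τ(λ_1,…,λ_m) = (N-m-1, λ_1-1, …, λ_m-1) with trailing zeros removed, is an isometry for the metric d(λ,μ) = |λ| + |μ| - 2|λ∩μ|. -/
/-!
Write `τ(λ)` as the positive part of the weakly decreasing sequence `(N - m - 1, λ₁ - 1, …, λ_m - 1)`.
Dropping zeros from the tail of two weakly decreasing sequences changes neither their sums nor the
sum of their termwise minima, so `d` may be computed before the zeros are removed. There `d` splits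
into the contribution of the new first row, `d((N - m - 1), (N - m' - 1)) = |m - m'|`, plus that of
the shifted rows, which is `d(λ, μ)` minus the same `|m - m'|` lost by removing the first column.
-/

def IsPartition (l : List ℕ) : Prop := l.Pairwise (· ≥ ·) ∧ ∀ x ∈ l, 0 < x

/-- Maximal hook length of a partition (0 for the empty partition). -/
def maxHook (l : List ℕ) : ℕ :=
  match l with
  | [] => 0
  | a :: t => a + t.length

def dP (l m : List ℕ) : ℤ :=
  (l.sum : ℤ) + (m.sum : ℤ) - 2 * ((l.zipWith min m).sum : ℤ)

/-- τ(λ) = (N-m-1, λ₁-1, …, λ_m-1) with trailing zeros removed. -/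
def tauP (N : ℕ) (l : List ℕ) : List ℕ :=
  ((N - l.length - 1) :: l.map (· - 1)).filter (fun x => decide (0 < x))

open List

lemma sum_zipWith_min_le_left : ∀ l m : List ℕ, (zipWith min l m).sum ≤ l.sum
  | [], _ => by simp
  | _ :: _, [] => by simp
  | a :: l, b :: m => by
    have := sum_zipWith_min_le_left l m
    simp only [zipWith_cons_cons, sum_cons]
    omega

lemma sum_zipWith_min_le_right (l m : List ℕ) : (zipWith min l m).sum ≤ m.sum := by
  rw [zipWith_comm_of_comm min_comm]
  exact sum_zipWith_min_le_left m l

lemma pos_of_mem_zipWith_min {l m : List ℕ} (hl : ∀ x ∈ l, 0 < x) (hm : ∀ x ∈ m, 0 < x) :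
    ∀ x ∈ zipWith min l m, 0 < x := by
  intro x hx
  rw [← map_uncurry_zip_eq_zipWith, mem_map] at hx
  obtain ⟨⟨a, b⟩, hab, rfl⟩ := hx
  exact lt_min (hl a (of_mem_zip hab).1) (hm b (of_mem_zip hab).2)

lemma sum_map_pred_add_length {l : List ℕ} (hl : ∀ x ∈ l, 0 < x) :
    (l.map (· - 1)).sum + l.length = l.sum := by
  induction l with
  | nil => rfl
  | cons a l ih =>
    have ha := hl a mem_cons_self
    have := ih fun x hx => hl x (mem_cons_of_mem a hx)
    simp only [map_cons, sum_cons, length_cons]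
    omega

lemma zipWith_min_map_pred (l m : List ℕ) :
    zipWith min (l.map (· - 1)) (m.map (· - 1)) = (zipWith min l m).map (· - 1) := by
  rw [zipWith_map, map_zipWith]
  congr 1
  funext a b
  exact (Monotone.map_min fun _ _ h => Nat.sub_le_sub_right h 1).symm

lemma sum_filter_pos (l : List ℕ) : (l.filter (0 < ·)).sum = l.sum := by
  induction l with
  | nil => rfl
  | cons a l ih => by_cases ha : 0 < a <;> simp_all

lemma eq_zero_of_pairwise_ge_zero_cons {l : List ℕ} (hl : (0 :: l).Pairwise (· ≥ ·)) :
    ∀ x ∈ 0 :: l, x = 0 := by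
  intro x hx
  rcases mem_cons.mp hx with rfl | hx
  · rfl
  · exact Nat.le_zero.mp ((pairwise_cons.mp hl).1 x hx)

lemma filter_pos_eq_nil_of_pairwise_ge_zero_cons {l : List ℕ} (hl : (0 :: l).Pairwise (· ≥ ·)) :
    (0 :: l).filter (0 < ·) = [] :=
  filter_eq_nil_iff.mpr fun x hx => by simp [eq_zero_of_pairwise_ge_zero_cons hl x hx]

lemma sum_zipWith_min_filter_pos : ∀ {l m : List ℕ}, l.Pairwise (· ≥ ·) → m.Pairwise (· ≥ ·) →
    (zipWith min (l.filter (0 < ·)) (m.filter (0 < ·))).sum = (zipWith min l m).sum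
  | [], _, _, _ => by simp
  | _ :: _, [], _, _ => by simp
  | a :: l, b :: m, hl, hm => by
    rcases Nat.eq_zero_or_pos a with rfl | ha
    · have := sum_zipWith_min_le_left (0 :: l) (b :: m)
      rw [sum_eq_zero (eq_zero_of_pairwise_ge_zero_cons hl)] at this
      rw [filter_pos_eq_nil_of_pairwise_ge_zero_cons hl]
      simp only [zipWith_nil_left, sum_nil]
      omega
    rcases Nat.eq_zero_or_pos b with rfl | hb
    · have := sum_zipWith_min_le_right (a :: l) (0 :: m)
      rw [sum_eq_zero (eq_zero_of_pairwise_ge_zero_cons hm)] at this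
      rw [filter_pos_eq_nil_of_pairwise_ge_zero_cons hm]
      simp only [zipWith_nil_right, sum_nil]
      omega
    simp [ha, hb, sum_zipWith_min_filter_pos hl.of_cons hm.of_cons]

lemma dP_filter_pos {l m : List ℕ} (hl : l.Pairwise (· ≥ ·)) (hm : m.Pairwise (· ≥ ·)) :
    dP (l.filter (0 < ·)) (m.filter (0 < ·)) = dP l m := by
  rw [dP, dP, sum_filter_pos, sum_filter_pos, sum_zipWith_min_filter_pos hl hm]

lemma dP_singleton (a b : ℕ) : dP [a] [b] = a + b - 2 * min a b := by
  simp [dP]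

lemma dP_cons_cons (a b : ℕ) (l m : List ℕ) : dP (a :: l) (b :: m) = dP [a] [b] + dP l m := by
  simp only [dP, zipWith_cons_cons, sum_cons, sum_nil, zipWith_nil_left]
  push_cast
  ring

lemma dP_singleton_reflect {N a b : ℕ} (ha : a < N) (hb : b < N) :
    dP [N - a - 1] [N - b - 1] = dP [a] [b] := by
  simp only [dP_singleton]
  omega

lemma dP_map_pred {l m : List ℕ} (hl : ∀ x ∈ l, 0 < x) (hm : ∀ x ∈ m, 0 < x) :
    dP (l.map (· - 1)) (m.map (· - 1)) = dP l m - dP [l.length] [m.length] := by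
  have hsl := sum_map_pred_add_length hl
  have hsm := sum_map_pred_add_length hm
  have hslm := sum_map_pred_add_length (pos_of_mem_zipWith_min hl hm)
  rw [length_zipWith] at hslm
  rw [dP_singleton]
  simp only [dP, zipWith_min_map_pred]
  omega

lemma length_le_maxHook {l : List ℕ} (hl : ∀ x ∈ l, 0 < x) : l.length ≤ maxHook l := by
  cases l with
  | nil => rfl
  | cons a l =>
    have := hl a mem_cons_self
    simp only [maxHook, length_cons]
    omega

lemma pairwise_ge_tau {N : ℕ} {l : List ℕ} (hl : l.Pairwise (· ≥ ·)) (hk : maxHook l < N) :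
    ((N - l.length - 1) :: l.map (· - 1)).Pairwise (· ≥ ·) := by
  refine pairwise_cons.mpr ⟨?_, hl.map _ fun a b h => Nat.sub_le_sub_right h 1⟩
  cases l with
  | nil => simp
  | cons a l =>
    simp only [maxHook] at hk
    simp only [mem_map, length_cons, forall_exists_index, and_imp, forall_apply_eq_imp_iff₂]
    intro x hx
    have : x ≤ a := (mem_cons.mp hx).elim le_of_eq fun hx => (pairwise_cons.mp hl).1 x hx
    omega

theorem tauP_isometry_general (N : ℕ) :
    ∀ l m : List ℕ, IsPartition l → maxHook l < N → IsPartition m → maxHook m < N →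
      dP (tauP N l) (tauP N m) = dP l m := by
  intro l m hl hkl hm hkm
  rw [tauP, tauP, dP_filter_pos (pairwise_ge_tau hl.1 hkl) (pairwise_ge_tau hm.1 hkm),
    dP_cons_cons, dP_map_pred hl.2 hm.2,
    dP_singleton_reflect ((length_le_maxHook hl.2).trans_lt hkl)
      ((length_le_maxHook hm.2).trans_lt hkm)]
  ring

theorem tauP_isometry (N : ℕ) (hN : 1 ≤ N) :
    ∀ l m : List ℕ, IsPartition l → maxHook l < N → IsPartition m → maxHook m < N →
      dP (tauP N l) (tauP N m) = dP l m :=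
  tauP_isometry_general N
end

section
/- Let N = 2k and α_0 = (k-1, k-2, …, 2, 1). Then for all i, j ∈ {0,…,N-1}, the partitions α_i = τ^i(α_0) satisfy d(α_i, α_j) = min(|j-i|, N-|j-i|); that is, the orbit of the staircase under τ is an N-cycle with edge length 1. -/
/-- The staircase partition (m, m-1, …, 2, 1). -/
def staircase (m : ℕ) : List ℕ := (List.range m).map (fun i => m - i)

/-! Write `N = 2k` and `s p = k - 1 - p` for the rows of `α₀`. For `j < N`, `αⱼ` is `s` plus one
box in each row of the window `Iⱼ = [0, j)` (if `j ≤ k`) or `[j - k, k)` (if `k < j`): removing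
the first column and prepending a row, `τ` moves the window by one step. As `d` is the `ℓ¹`
distance of the zero-padded row vectors, the staircase cancels and
`d(αᵢ, αⱼ) = |Iᵢ| + |Iⱼ| - 2 |Iᵢ ∩ Iⱼ| = min(|j - i|, N - |j - i|)`. -/

open Finset

namespace List

theorem sum_eq_sum_range_getD {M : Type*} [AddCommMonoid M] (l : List M) {n : ℕ}
    (h : l.length ≤ n) : l.sum = ∑ p ∈ Finset.range n, l.getD p 0 := by
  induction l generalizing n with
  | nil => simp
  | cons a t ih =>
    cases n with
    | zero => simp at h
    | succ n =>
      rw [Finset.sum_range_succ', sum_cons, ih (by simpa using h)]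
      simp [add_comm]

theorem getD_zipWith_min (l m : List ℕ) (p : ℕ) :
    (zipWith min l m).getD p 0 = min (l.getD p 0) (m.getD p 0) := by
  simp only [getD_eq_getElem?_getD, getElem?_zipWith]
  cases l[p]? <;> cases m[p]? <;> simp

theorem filter_pos_map_range {f : ℕ → ℕ} {m n : ℕ} (hmn : m ≤ n)
    (hf : ∀ p < n, 0 < f p ↔ p < m) :
    ((range n).map f).filter (fun x => decide (0 < x)) = (range m).map f := by
  induction n with
  | zero => simp [Nat.le_zero.mp hmn]
  | succ n ih =>
    rcases hmn.eq_or_lt with rfl | hlt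
    · exact filter_eq_self.mpr fun x hx => by
        obtain ⟨p, hp, rfl⟩ := mem_map.mp hx
        simpa using (hf p (mem_range.mp hp)).mpr (mem_range.mp hp)
    · have hn : f n = 0 := Nat.eq_zero_of_not_pos fun h => by
        have := (hf n n.lt_succ_self).mp h
        omega
      rw [range_succ, map_append, filter_append, ih (by omega) fun p hp => hf p (by omega)]
      simp [hn]

end List

theorem dP_eq_sum_range {l m : List ℕ} {n : ℕ} (hl : l.length ≤ n) (hm : m.length ≤ n) :
    dP l m = ∑ p ∈ range n,
      ((l.getD p 0 : ℤ) + m.getD p 0 - 2 * (min (l.getD p 0) (m.getD p 0) : ℕ)) := by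
  have hlm : (l.zipWith min m).length ≤ n := by simp only [List.length_zipWith]; omega
  rw [dP, List.sum_eq_sum_range_getD l hl, List.sum_eq_sum_range_getD m hm,
    List.sum_eq_sum_range_getD _ hlm]
  simp only [List.getD_zipWith_min]
  push_cast
  rw [sum_sub_distrib, sum_add_distrib, mul_sum]

-- `j - k` truncates to `0` for `j ≤ k`, giving the window `[0, j)`.
def addedRows (k j : ℕ) : Finset ℕ := Ico (j - k) (min j k)

theorem addedRows_subset_range (k j : ℕ) : addedRows k j ⊆ range k := fun p hp => by
  simp only [addedRows, mem_Ico] at hp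
  simp only [mem_range]
  omega

def orbitEntry (k j p : ℕ) : ℕ := k - 1 - p + if p ∈ addedRows k j then 1 else 0

def orbitLength (k j : ℕ) : ℕ := if j < k then k - 1 else k

def orbitPartition (k j : ℕ) : List ℕ := (List.range (orbitLength k j)).map (orbitEntry k j)

theorem staircase_eq_orbitPartition_zero (k : ℕ) : staircase (k - 1) = orbitPartition k 0 := by
  have hL : orbitLength k 0 = k - 1 := by unfold orbitLength; split_ifs <;> omega
  simp [staircase, orbitPartition, hL, orbitEntry, addedRows]

theorem tauP_orbitPartition {k j : ℕ} (hj : j + 1 < 2 * k) :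
    tauP (2 * k) (orbitPartition k j) = orbitPartition k (j + 1) := by
  have hlen (j : ℕ) : j < k ∧ orbitLength k j = k - 1 ∨ k ≤ j ∧ orbitLength k j = k := by
    unfold orbitLength; split_ifs <;> omega
  have hlen_j := hlen j
  have hlen_succ := hlen (j + 1)
  have hlen_pos : orbitLength k (j + 1) = orbitLength k (j + 1) - 1 + 1 := by omega
  have hfilter (p : ℕ) (hp : p < orbitLength k j) :
      0 < orbitEntry k j p - 1 ↔ p < orbitLength k (j + 1) - 1 := by
    simp only [orbitEntry, addedRows, mem_Ico]; split_ifs <;> omega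
  rw [tauP, orbitPartition, List.length_map, List.length_range,
    List.filter_cons_of_pos (by simp; omega), List.map_map,
    List.filter_pos_map_range (f := (· - 1) ∘ orbitEntry k j) (by omega) hfilter,
    orbitPartition, hlen_pos, List.range_succ_eq_map, List.map_cons, List.map_map]
  congr 1
  · simp only [orbitEntry, addedRows, mem_Ico]; split_ifs <;> omega
  · refine List.map_congr_left fun p hp => ?_
    simp only [List.mem_range] at hp
    simp only [Function.comp_apply, orbitEntry, addedRows, mem_Ico, Nat.succ_eq_add_one]
    split_ifs <;> omega

theorem iterate_tauP_staircase {k j : ℕ} (hj : j < 2 * k) :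
    (tauP (2 * k))^[j] (staircase (k - 1)) = orbitPartition k j := by
  induction j with
  | zero => exact staircase_eq_orbitPartition_zero k
  | succ j ih =>
    rw [Function.iterate_succ_apply', ih (by omega), tauP_orbitPartition hj]

theorem length_orbitPartition_le (k j : ℕ) : (orbitPartition k j).length ≤ k := by
  simp only [orbitPartition, List.length_map, List.length_range, orbitLength]
  split_ifs <;> omega

theorem getD_orbitPartition {k j p : ℕ} (hp : p < k) :
    (orbitPartition k j).getD p 0 = orbitEntry k j p := by
  by_cases hpL : p < orbitLength k j
  · simp [orbitPartition, List.getD_eq_getElem?_getD, hpL]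
  · rw [List.getD_eq_default _ _ (by simpa [orbitPartition] using hpL)]
    simp only [orbitLength, orbitEntry, addedRows, mem_Ico] at hpL ⊢
    split_ifs at hpL ⊢ <;> omega

theorem dP_orbitPartition (k i j : ℕ) :
    dP (orbitPartition k i) (orbitPartition k j) =
      #(addedRows k i) + #(addedRows k j) - 2 * #(addedRows k i ∩ addedRows k j) := by
  have hterm : ∀ p ∈ range k,
      ((orbitPartition k i).getD p 0 : ℤ) + (orbitPartition k j).getD p 0
          - 2 * (min ((orbitPartition k i).getD p 0) ((orbitPartition k j).getD p 0) : ℕ) =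
        (if p ∈ addedRows k i then 1 else 0) + (if p ∈ addedRows k j then 1 else 0)
          - 2 * (if p ∈ addedRows k i ∩ addedRows k j then 1 else 0) := by
    intro p hp
    rw [getD_orbitPartition (mem_range.mp hp), getD_orbitPartition (mem_range.mp hp)]
    simp only [orbitEntry, mem_inter]
    by_cases hpi : p ∈ addedRows k i <;> by_cases hpj : p ∈ addedRows k j <;>
      simp only [hpi, hpj, if_true, if_false, and_true, and_false] <;> omega
  rw [dP_eq_sum_range (length_orbitPartition_le k i) (length_orbitPartition_le k j),
    sum_congr rfl hterm, sum_sub_distrib, sum_add_distrib, ← mul_sum]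
  simp only [sum_ite_mem, inter_eq_right.mpr (addedRows_subset_range k _),
    inter_eq_right.mpr (inter_subset_left.trans (addedRows_subset_range k i)), sum_const, nsmul_one]

theorem even_cycle_metric_general (k : ℕ) (i j : ℕ)
    (hi : i < 2 * k) (hj : j < 2 * k) :
    dP ((tauP (2 * k))^[i] (staircase (k - 1)))
       ((tauP (2 * k))^[j] (staircase (k - 1)))
      = min (((j : ℤ) - i).natAbs : ℤ)
          ((2 * k : ℤ) - (((j : ℤ) - i).natAbs : ℤ)) := by
  rw [iterate_tauP_staircase hi, iterate_tauP_staircase hj, dP_orbitPartition]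
  simp only [addedRows, Ico_inter_Ico, Nat.card_Ico]
  omega

theorem even_cycle_metric (k : ℕ) (hk : 1 ≤ k) (i j : ℕ)
    (hi : i < 2 * k) (hj : j < 2 * k) :
    dP ((tauP (2 * k))^[i] (staircase (k - 1)))
       ((tauP (2 * k))^[j] (staircase (k - 1)))
      = min (((j : ℤ) - i).natAbs : ℤ)
          ((2 * k : ℤ) - (((j : ℤ) - i).natAbs : ℤ)) :=
  even_cycle_metric_general k i j hi hj
end

section
/- Let S = [[1,1,0],[t,t,1],[t,t,t]] over ℤ[t]. For n ≥ 1, S^n = a_n·S + b_n·(S² - (1+t)·S), where a_n = Σ_{j=0}^{n-1} C(2(n-1)-j, j)·t^j and b_n = Σ_{j=0}^{n-2} C(2(n-1)-j-1, j)·t^j. -/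
open Polynomial

noncomputable def Smat : Matrix (Fin 3) (Fin 3) (Polynomial ℤ) :=
  !![1, 1, 0; X, X, 1; X, X, X]

/-- a_n = Σ_{j=0}^{n-1} C(2(n-1)-j, j) t^j. -/
noncomputable def aP (n : ℕ) : Polynomial ℤ :=
  ∑ j ∈ Finset.range n, (C ((2 * (n - 1) - j).choose j : ℤ)) * X ^ j

/-- b_n = Σ_{j=0}^{n-2} C(2(n-1)-j-1, j) t^j. -/
noncomputable def bP (n : ℕ) : Polynomial ℤ :=
  ∑ j ∈ Finset.range (n - 1), (C ((2 * (n - 1) - j - 1).choose j : ℤ)) * X ^ j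

/-!
With `E = S² - (1 + t) S`, the Cayley–Hamilton relation `S³ = (1 + 2t) S² - t² S` gives
`E S = t E + t S`. Hence the coordinates of `S^(m+1)` in the pair `S, E` obey a two-step linear
recurrence, solved by the Jacobsthal polynomials `J₀ = 0, J₁ = 1, J_{N+2} = J_{N+1} + t J_N`:
`S^(m+1) = J_{2m+1} S + J_{2m} E`. Comparing coefficients, `J_{N+1} = Σ_k C(N - k, k) tᵏ`
by Pascal's rule, which identifies `a_n = J_{2n-1}` and `b_n = J_{2n-2}`.
-/

def jacobsthal {R : Type*} [Semiring R] (t : R) : ℕ → R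
  | 0 => 0
  | 1 => 1
  | n + 2 => jacobsthal t (n + 1) + t * jacobsthal t n

section Jacobsthal

variable {R : Type*} [Semiring R] (t : R)

@[simp] lemma jacobsthal_zero : jacobsthal t 0 = 0 := rfl

@[simp] lemma jacobsthal_one : jacobsthal t 1 = 1 := rfl

lemma jacobsthal_add_two (n : ℕ) :
    jacobsthal t (n + 2) = jacobsthal t (n + 1) + t * jacobsthal t n := rfl

end Jacobsthal

lemma coeff_jacobsthal_X (n k : ℕ) :
    (jacobsthal (X : ℤ[X]) (n + 1)).coeff k = (n - k).choose k := by
  induction n using Nat.twoStepInduction generalizing k with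
  | zero => cases k <;> simp [coeff_one]
  | one => rcases k with _ | _ | k <;> simp [jacobsthal_add_two, coeff_one]
  | more n ih₀ ih₁ =>
    rcases k with _ | k
    · simp [jacobsthal_add_two, ih₀]
    rw [jacobsthal_add_two, coeff_add, coeff_X_mul, ih₀, ih₁]
    rcases le_or_gt k n with hk | hk
    · rw [show n + 2 - (k + 1) = n - k + 1 by omega, show n + 1 - (k + 1) = n - k by omega,
        Nat.choose_succ_succ', Nat.cast_add, add_comm]
    · simp [show n - k = 0 by omega, show n + 1 - (k + 1) = 0 by omega,
        show n + 2 - (k + 1) = 0 by omega, Nat.choose_eq_zero_of_lt (by omega : 0 < k)]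

section Cubic

variable {R A : Type*} [CommRing R] [Ring A] [Algebra R A]

lemma pow_succ_eq_jacobsthal_smul {t : R} {s : A}
    (hs : s ^ 3 = (1 + 2 * t) • s ^ 2 - t ^ 2 • s) (m : ℕ) :
    s ^ (m + 1) = jacobsthal t (2 * m + 1) • s + jacobsthal t (2 * m) • (s ^ 2 - (1 + t) • s) := by
  induction m with
  | zero => simp
  | succ m ih =>
    have h_mul_s : (s ^ 2 - (1 + t) • s) * s = t • (s ^ 2 - (1 + t) • s) + t • s := by
      rw [sub_mul, smul_mul_assoc, ← pow_succ, ← sq, hs]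
      module
    rw [pow_succ, ih, add_mul, smul_mul_assoc, smul_mul_assoc, h_mul_s, ← sq,
      show 2 * (m + 1) + 1 = 2 * m + 1 + 2 by ring, show 2 * (m + 1) = 2 * m + 2 by ring,
      jacobsthal_add_two, jacobsthal_add_two]
    module

end Cubic

-- Cayley–Hamilton: the characteristic polynomial of `Smat` is `x³ - (1 + 2t) x² + t² x`.
lemma Smat_pow_three : Smat ^ 3 = (1 + 2 * X : ℤ[X]) • Smat ^ 2 - (X ^ 2 : ℤ[X]) • Smat := by
  ext i j : 1
  fin_cases i <;> fin_cases j <;>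
    simp [Smat, pow_succ, Matrix.mul_apply, Fin.sum_univ_three] <;> ring

lemma aP_succ (m : ℕ) : aP (m + 1) = jacobsthal X (2 * m + 1) := by
  ext k
  rw [coeff_jacobsthal_X]
  simp only [aP, finsetSum_coeff, coeff_C_mul, coeff_X_pow, mul_ite, mul_one, mul_zero,
    Finset.sum_ite_eq, Finset.mem_range, add_tsub_cancel_right]
  split_ifs with hk
  · rfl
  · rw [Nat.choose_eq_zero_of_lt (by omega), Nat.cast_zero]

lemma bP_succ (m : ℕ) : bP (m + 1) = jacobsthal X (2 * m) := by
  rcases m with _ | m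
  · simp [bP]
  ext k
  rw [show 2 * (m + 1) = 2 * m + 1 + 1 by ring, coeff_jacobsthal_X]
  simp only [bP, finsetSum_coeff, coeff_C_mul, coeff_X_pow, mul_ite, mul_one, mul_zero,
    Finset.sum_ite_eq, Finset.mem_range, add_tsub_cancel_right]
  split_ifs with hk
  · congr 2
    omega
  · rw [Nat.choose_eq_zero_of_lt (by omega), Nat.cast_zero]

theorem Smat_pow (n : ℕ) (hn : 1 ≤ n) :
    Smat ^ n = aP n • Smat + bP n • (Smat ^ 2 - ((1 + X : Polynomial ℤ)) • Smat) := by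
  obtain ⟨m, rfl⟩ : ∃ m, n = m + 1 := ⟨n - 1, by omega⟩
  rw [aP_succ, bP_succ]
  exact pow_succ_eq_jacobsthal_smul Smat_pow_three m
end

section
/- For integers k ≥ 1 and 2 ≤ s ≤ k, the binomial identity C(2(k+1)-s, s) - C(2(k-1)-(s-2), s-2) = (2k+1)/(2k+1-s) · C(2k+1-s, s) holds; equivalently, (2k+1-s)·(C(2k+2-s, s) - C(2k-s, s-2)) = (2k+1)·C(2k+1-s, s). -/
/-! With `n = 2k+1-s`, Pascal's rule applied twice gives
`C(n+1, s) - C(n-1, s-2) = C(n, s) + C(n-1, s-1)`, and the absorption identity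
`n · C(n-1, s-1) = s · C(n, s)` turns `n` times the right side into `(n + s) · C(n, s)`,
where `n + s = 2k+1`. -/

namespace Nat

theorem choose_add_two_add_two (m t : ℕ) :
    (m + 2).choose (t + 2) = m.choose t + m.choose (t + 1) + (m + 1).choose (t + 2) := by
  rw [choose_succ_succ (m + 1), choose_succ_succ m]

theorem add_one_mul_choose_add_two_sub_choose (m t : ℕ) :
    ((m + 1 : ℕ) : ℤ) * (((m + 2).choose (t + 2) : ℤ) - (m.choose t : ℤ))
      = (m + t + 3 : ℤ) * ((m + 1).choose (t + 2) : ℤ) := by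
  have hpascal : ((m + 2).choose (t + 2) : ℤ) - m.choose t
      = m.choose (t + 1) + (m + 1).choose (t + 2) := by
    rw [choose_add_two_add_two]; push_cast; ring
  have habsorb : ((m + 1 : ℕ) : ℤ) * m.choose (t + 1) = (m + 1).choose (t + 2) * (t + 2) := by
    exact_mod_cast add_one_mul_choose_eq m (t + 1)
  rw [hpascal, mul_add, habsorb]
  push_cast
  ring

end Nat

theorem binom_identity_general (k s : ℕ) (hs : 2 ≤ s) (hsk : s ≤ k) :
    ((2 * k + 1 - s : ℕ) : ℤ) *
        (((2 * k + 2 - s).choose s : ℤ) - ((2 * k - s).choose (s - 2) : ℤ))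
      = (2 * k + 1 : ℤ) * ((2 * k + 1 - s).choose s : ℤ) := by
  obtain ⟨t, rfl⟩ : ∃ t, s = t + 2 := ⟨s - 2, by omega⟩
  obtain ⟨m, hm⟩ : ∃ m, 2 * k - (t + 2) = m := ⟨_, rfl⟩
  have h1 : 2 * k + 1 - (t + 2) = m + 1 := by omega
  have h2 : 2 * k + 2 - (t + 2) = m + 2 := by omega
  have h2k : (2 * k + 1 : ℤ) = m + t + 3 := by omega
  rw [h1, h2, hm, Nat.add_sub_cancel, h2k]
  exact Nat.add_one_mul_choose_add_two_sub_choose m t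

theorem binom_identity (k s : ℕ) (hk : 1 ≤ k) (hs : 2 ≤ s) (hsk : s ≤ k) :
    ((2 * k + 1 - s : ℕ) : ℤ) *
        (((2 * k + 2 - s).choose s : ℤ) - ((2 * k - s).choose (s - 2) : ℤ))
      = (2 * k + 1 : ℤ) * ((2 * k + 1 - s).choose s : ℤ) :=
  binom_identity_general k s hs hsk
end

section
/- For odd N = 2k+1 ≥ 3, the number of v-dimensional faces of the injective hull of the N-cycle equals (1/2^(N-2v-1))·Σ_{s=v}^{k} C(N, 2s)·C(s, v)·5^(s-v), and this also equals Σ_{s=v}^{k} (N/(N-s))·C(N-s, s)·C(s, v); in particular these two expressions are equal for all 0 ≤ v ≤ k. -/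
/-
With `f_N = evenChoosePoly N = ∑ₛ C(N, 2s) Xˢ` we have `f_N(x²) = ((1 + x)ᴺ + (1 - x)ᴺ) / 2`, and the
Lucas polynomial `g_N = lucasPoly N` is `g_N(y) = αᴺ + βᴺ` for the roots `α, β` of `t² = t + y`.
Doubling the roots of `t² = t + (y + 1)` gives the roots `1 ± √(4y + 5)` of `u² = 2u + 4y + 4`, so
`2 f_N(4y + 5) = 2ᴺ g_N(y + 1)`: both sides satisfy the same two-term recurrence and initial values.
Comparing coefficients of `yᵛ` gives `2 · 4ᵛ · (left sum) = 2ᴺ · (right sum)`, once the coefficients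
of `g_N` are identified as `N / (N - s) · C(N - s, s)`. That identification, and with it the
divisibility, comes from `g_{N+2} = a_{N+2} + y a_N` for the Fibonacci polynomials
`a_N = ∑ₛ C(N - s, s) yˢ` and the absorption identity `(m + 1) C(m, t) = (t + 1) C(m + 1, t + 1)`.
-/

open Polynomial Finset

namespace Polynomial

variable {R : Type*}

theorem coeff_C_mul_X_add_C_pow [CommSemiring R] (a b : R) (n k : ℕ) :
    ((C a * X + C b) ^ n).coeff k = a ^ k * b ^ (n - k) * n.choose k := by
  have hterm (m : ℕ) : (C a * X) ^ m * C b ^ (n - m) * (n.choose m : R[X]) =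
      C (a ^ m * b ^ (n - m) * n.choose m) * X ^ m := by
    simp only [map_mul, map_pow, map_natCast]; ring
  simp_rw [add_pow, hterm, finsetSum_coeff, coeff_C_mul_X_pow, sum_ite_eq, mem_range]
  split_ifs with hk
  · rfl
  · simp [Nat.choose_eq_zero_of_lt (by omega : n < k)]

theorem coeff_comp_eq_sum_range [Semiring R] {p : R[X]} {n : ℕ} (hp : p.natDegree < n)
    (q : R[X]) (k : ℕ) : (p.comp q).coeff k = ∑ s ∈ range n, p.coeff s * (q ^ s).coeff k := by
  conv_lhs => rw [p.as_sum_range' n hp]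
  simp [monomial_comp, coeff_C_mul]

end Polynomial

theorem Finset.sum_range_succ_eq_sum_Icc {M : Type*} [AddCommMonoid M] {f : ℕ → M} {v : ℕ}
    (hf : ∀ s < v, f s = 0) (k : ℕ) : ∑ s ∈ range (k + 1), f s = ∑ s ∈ Icc v k, f s := by
  refine (sum_subset (fun s hs => ?_) fun s _ hs => hf s ?_).symm
  · simp only [mem_Icc, mem_range] at hs ⊢; omega
  · simp_all only [mem_Icc, mem_range]; omega

noncomputable def evenChoosePoly : ℕ → ℤ[X]
  | 0 => 1
  | 1 => 1
  | n + 2 => 2 * evenChoosePoly (n + 1) + (X - 1) * evenChoosePoly n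

noncomputable def fibPoly : ℕ → ℤ[X]
  | 0 => 1
  | 1 => 1
  | n + 2 => fibPoly (n + 1) + X * fibPoly n

noncomputable def lucasPoly : ℕ → ℤ[X]
  | 0 => 2
  | 1 => 1
  | n + 2 => lucasPoly (n + 1) + X * lucasPoly n

theorem coeff_evenChoosePoly (N s : ℕ) : (evenChoosePoly N).coeff s = N.choose (2 * s) := by
  induction N using Nat.twoStepInduction generalizing s with
  | zero | one =>
    rcases Nat.lt_or_ge 1 s with hs | hs
    · rw [Nat.choose_eq_zero_of_lt (by omega)]
      simp [evenChoosePoly, coeff_one, show s ≠ 0 by omega]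
    · interval_cases s <;> simp [evenChoosePoly, coeff_one]
  | more n ih₀ ih₁ =>
    simp only [evenChoosePoly, coeff_add, coeff_ofNat_mul, sub_mul, coeff_sub, one_mul, ih₀, ih₁]
    rcases s with _ | t
    · simp
    · rw [coeff_X_mul, ih₀, show 2 * (t + 1) = 2 * t + 1 + 1 by ring, Nat.choose_succ_succ' (n + 1),
        Nat.choose_succ_succ' n (2 * t), Nat.choose_succ_succ' n (2 * t + 1)]
      push_cast
      ring

theorem natDegree_evenChoosePoly_le (N : ℕ) : (evenChoosePoly N).natDegree ≤ N / 2 :=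
  natDegree_le_iff_coeff_eq_zero.mpr fun s hs => by
    rw [coeff_evenChoosePoly, Nat.choose_eq_zero_of_lt (by omega), Nat.cast_zero]

theorem coeff_fibPoly (N s : ℕ) : (fibPoly N).coeff s = (N - s).choose s := by
  induction N using Nat.twoStepInduction generalizing s with
  | zero => cases s <;> simp [fibPoly, coeff_one]
  | one => rcases s with _ | _ | s <;> simp [fibPoly, coeff_one]
  | more n ih₀ ih₁ =>
    rcases s with _ | t
    · simp [fibPoly, ih₁]
    · simp only [fibPoly, coeff_add, coeff_X_mul, ih₀, ih₁]
      rcases le_or_gt t n with h | h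
      · rw [show n + 2 - (t + 1) = n - t + 1 by omega, show n + 1 - (t + 1) = n - t by omega,
          Nat.choose_succ_succ']
        push_cast; ring
      · rw [show n + 2 - (t + 1) = 0 by omega, show n + 1 - (t + 1) = 0 by omega,
          show n - t = 0 by omega, Nat.choose_eq_zero_of_lt (by omega : 0 < t)]
        simp

theorem lucasPoly_add_two (n : ℕ) : lucasPoly (n + 2) = fibPoly (n + 2) + X * fibPoly n := by
  induction n using Nat.twoStepInduction with
  | zero => simp [lucasPoly, fibPoly]; ring
  | one => simp [lucasPoly, fibPoly]; ring
  | more n ih₀ ih₁ =>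
    rw [lucasPoly, ih₀, ih₁]
    simp only [fibPoly]
    ring

theorem natDegree_lucasPoly_le (N : ℕ) : (lucasPoly N).natDegree ≤ N / 2 := by
  induction N using Nat.twoStepInduction with
  | zero => simp [lucasPoly]
  | one => simp [lucasPoly]
  | more n ih₀ ih₁ =>
    rw [lucasPoly]
    refine (natDegree_add_le _ _).trans (max_le (by omega) ?_)
    exact (natDegree_mul_le).trans (by simp; omega)

theorem sub_mul_coeff_lucasPoly (N s : ℕ) :
    ((N - s : ℕ) : ℤ) * (lucasPoly N).coeff s = N * (N - s).choose s := by
  rcases le_or_gt N s with hs | hs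
  · rcases Nat.eq_zero_or_pos s with rfl | hs₀
    · simp [show N = 0 by omega]
    · simp [Nat.sub_eq_zero_of_le hs, Nat.choose_eq_zero_of_lt hs₀]
  obtain ⟨m, rfl⟩ : ∃ m, N = s + m + 1 := ⟨N - s - 1, by omega⟩
  rcases s with _ | t
  · rcases m with _ | n
    · simp [lucasPoly]
    · simp [lucasPoly_add_two, coeff_fibPoly]
  · rw [show t + 1 + m + 1 = (t + m) + 2 by ring, lucasPoly_add_two, coeff_add, coeff_X_mul,
      coeff_fibPoly, coeff_fibPoly, show t + m + 2 - (t + 1) = m + 1 by omega,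
      show t + m - t = m by omega]
    have absorb : ((m + 1) * m.choose t : ℤ) = (m + 1).choose (t + 1) * (t + 1) := by
      exact_mod_cast Nat.add_one_mul_choose_eq m t
    push_cast
    linear_combination absorb

theorem Nat.sub_dvd_mul_choose (N s : ℕ) : N - s ∣ N * (N - s).choose s :=
  Int.natCast_dvd_natCast.mp ⟨(lucasPoly N).coeff s, by push_cast [sub_mul_coeff_lucasPoly]; rfl⟩

theorem coeff_lucasPoly_of_lt {N s : ℕ} (hs : s < N) :
    (lucasPoly N).coeff s = ((N * (N - s).choose s / (N - s) : ℕ) : ℤ) := by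
  rw [Int.natCast_div]
  refine Int.eq_ediv_of_mul_eq_right (by omega) ?_
  rw [sub_mul_coeff_lucasPoly]
  push_cast; rfl

theorem two_mul_evenChoosePoly_comp (N : ℕ) :
    2 * (evenChoosePoly N).comp (C 4 * X + C 5) = 2 ^ N * (lucasPoly N).comp (X + 1) := by
  rw [C_ofNat, C_ofNat]
  induction N using Nat.twoStepInduction with
  | zero => simp [evenChoosePoly, lucasPoly]
  | one => simp [evenChoosePoly, lucasPoly]
  | more n ih₀ ih₁ =>
    simp only [evenChoosePoly, lucasPoly, add_comp, mul_comp, sub_comp, X_comp, one_comp,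
      ofNat_comp]
    linear_combination 2 * ih₁ + (4 * X + 4) * ih₀

theorem coeff_evenChoosePoly_comp (N v : ℕ) :
    ((evenChoosePoly N).comp (C 4 * X + C 5)).coeff v =
      4 ^ v * ∑ s ∈ Icc v (N / 2), ((N.choose (2 * s) * s.choose v * 5 ^ (s - v) : ℕ) : ℤ) := by
  rw [coeff_comp_eq_sum_range (Nat.lt_succ_of_le (natDegree_evenChoosePoly_le N)),
    sum_range_succ_eq_sum_Icc (v := v) fun s hs => by
      rw [coeff_C_mul_X_add_C_pow, Nat.choose_eq_zero_of_lt hs, Nat.cast_zero, mul_zero, mul_zero],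
    mul_sum]
  refine sum_congr rfl fun s _ => ?_
  rw [coeff_evenChoosePoly, coeff_C_mul_X_add_C_pow]
  push_cast; ring

theorem coeff_lucasPoly_comp {N : ℕ} (hN : N ≠ 0) (v : ℕ) :
    ((lucasPoly N).comp (X + 1)).coeff v =
      ∑ s ∈ Icc v (N / 2), ((N * (N - s).choose s / (N - s) * s.choose v : ℕ) : ℤ) := by
  rw [coeff_comp_eq_sum_range (Nat.lt_succ_of_le (natDegree_lucasPoly_le N)),
    sum_range_succ_eq_sum_Icc (v := v) fun s hs => by
      simp [coeff_X_add_one_pow, Nat.choose_eq_zero_of_lt hs]]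
  refine sum_congr rfl fun s hs => ?_
  rw [coeff_lucasPoly_of_lt (by simp only [mem_Icc] at hs; omega), coeff_X_add_one_pow]
  push_cast; rfl

theorem face_count_formulas_agree_general (k v : ℕ) (hv : v ≤ k) :
    (∀ s ≤ k, (2 * k + 1 - s) ∣ (2 * k + 1) * (2 * k + 1 - s).choose s) ∧
    ∑ s ∈ Finset.Icc v k, (2 * k + 1).choose (2 * s) * s.choose v * 5 ^ (s - v)
      = 2 ^ (2 * k - 2 * v) *
        ∑ s ∈ Finset.Icc v k,
          ((2 * k + 1) * (2 * k + 1 - s).choose s / (2 * k + 1 - s)) * s.choose v := by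
  refine ⟨fun s _ => Nat.sub_dvd_mul_choose _ s, ?_⟩
  have hpow : (2 : ℤ) ^ (2 * k + 1) = 2 * 4 ^ v * 2 ^ (2 * k - 2 * v) := by
    rw [show (4 : ℤ) = 2 ^ 2 by norm_num, ← pow_mul, ← pow_succ', ← pow_add]
    congr 1; omega
  have key := congrArg (coeff · v) (two_mul_evenChoosePoly_comp (2 * k + 1))
  rw [coeff_ofNat_mul, ← C_ofNat, ← C_pow, coeff_C_mul, coeff_evenChoosePoly_comp,
    coeff_lucasPoly_comp (by omega), show (2 * k + 1) / 2 = k by omega, hpow] at key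
  apply Nat.cast_injective (R := ℤ)
  apply mul_left_cancel₀ (show (2 * 4 ^ v : ℤ) ≠ 0 by positivity)
  push_cast [Nat.cast_sum] at key ⊢
  linear_combination key

/-- The two formulas for the number of v-faces of E(C_N), N = 2k+1 ≥ 3, agree:
(1/2^(N-2v-1))·Σ_{s=v}^{k} C(N,2s)·C(s,v)·5^(s-v) = Σ_{s=v}^{k} (N/(N-s))·C(N-s,s)·C(s,v),
stated with the power of 2 cleared (N - 2v - 1 = 2(k-v)). -/
theorem face_count_formulas_agree (k v : ℕ) (hk : 1 ≤ k) (hv : v ≤ k) :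
    (∀ s ≤ k, (2 * k + 1 - s) ∣ (2 * k + 1) * (2 * k + 1 - s).choose s) ∧
    ∑ s ∈ Finset.Icc v k, (2 * k + 1).choose (2 * s) * s.choose v * 5 ^ (s - v)
      = 2 ^ (2 * k - 2 * v) *
        ∑ s ∈ Finset.Icc v k,
          ((2 * k + 1) * (2 * k + 1 - s).choose s / (2 * k + 1 - s)) * s.choose v :=
  face_count_formulas_agree_general k v hv
end
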